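/- arXiv:1908.02211 — 2 statements merged into one kernel-verified Lean document; each statement's English description precedes it below -/
import Mathlib

section
/- (Lemma 1, safety) Let G = (V,E) be a directed graph, col : V → Set C an assignment of a set of colors to each node, and κ a color. Let P = (v_0, v_1, …, v_t) be a path in G with pairwise distinct nodes, and let K = {u ∈ V : κ ∈ col(u)}. Assume: (i) K ⊆ {v_0, …, v_t}; (ii) for every 1 ≤ j ≤ t, if v_{j−1} has outdegree greater than one then κ ∈ col(v_j); and (iii) (unambiguity) no two distinct nodes of K have a common predecessor among {v_0, …, v_{t−1}}. Then P is safe for κ: for every 0 ≤ j < t such that v_j has outdegree greater than one, v_{j+1} is the unique successor of v_j with κ among its colors. -/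
/-- Lemma 1, safety. Let `E` be the edge relation of a directed graph on `V`,
`col` a color-set assignment and `κ` a color. Let `v 0, …, v t` be a path with pairwise
distinct nodes such that: (i) every node colored with `κ` lies on the path; (ii) whenever
`v (j-1)` (for `1 ≤ j ≤ t`) has more than one successor, `v j` is colored with `κ`; and
(iii) no two distinct `κ`-colored nodes have a common predecessor among `v 0, …, v (t-1)`.
Then the path is safe for `κ`: for every `j < t` such that `v j` has more than one
successor, `v (j+1)` is the unique successor of `v j` whose color set contains `κ`. -/
theorem path_safe_for_color {V C : Type*} (E : V → V → Prop) (col : V → Set C) (κ : C)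
    (t : ℕ) (v : ℕ → V)
    (hpath : ∀ j, j < t → E (v j) (v (j + 1)))
    (hdist : ∀ i, i ≤ t → ∀ j, j ≤ t → v i = v j → i = j)
    (hcover : ∀ u, κ ∈ col u → ∃ j, j ≤ t ∧ u = v j)
    (hcrit : ∀ j, 1 ≤ j → j ≤ t → {w | E (v (j - 1)) w}.Nontrivial → κ ∈ col (v j))
    (hunamb : ∀ u u', κ ∈ col u → κ ∈ col u' → u ≠ u' →
      ¬ ∃ p, (∃ j, j < t ∧ p = v j) ∧ E p u ∧ E p u') :
    ∀ j, j < t → {w | E (v j) w}.Nontrivial →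
      (E (v j) (v (j + 1)) ∧ κ ∈ col (v (j + 1)) ∧
        ∀ w, E (v j) w → κ ∈ col w → w = v (j + 1)) := by
  intro j hj hnt
  have hcol : κ ∈ col (v (j + 1)) := by
    have := hcrit (j + 1) (by omega) (by omega)
    simpa using this hnt
  refine ⟨hpath j hj, hcol, fun w hw hwcol => ?_⟩
  by_contra hne
  exact hunamb w (v (j + 1)) hwcol hcol hne ⟨v j, ⟨j, hj, rfl⟩, hw, hpath j hj⟩
end

section
/- (Lemma 3) Let Σ be a finite alphabet, X a nonempty string over Σ, and b, c ∈ Σ two distinct symbols. Set R = {X·b·X·c} and k = |X|+1. Then in the de Bruijn graph G_R^k: the string X is a node lying on the path of the string S = X·b·X·c; X has two distinct successors, tail(X)·b and tail(X)·c, both of which lie on the path of S and both of which are critical. Consequently, for every color-set assignment col that gives a color κ to every critical node lying on the path of S, the node X has two distinct successors whose color sets both contain κ, so the path of S is not safe for κ and the greedy κ-rule walk cannot reconstruct S unambiguously. -/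
/-- `W` is a k-mer of the collection `R`: a string of length `k` occurring as an
infix of some string of `R`. -/
def isKmer {α : Type*} (R : Set (List α)) (k : ℕ) (W : List α) : Prop :=
  W.length = k ∧ ∃ S ∈ R, W <:+: S

/-- There is an edge from `u` to `v` in the de Bruijn graph `G_R^k`: some k-mer `W`
of `R` has `u = W` minus its last symbol and `v = W` minus its first symbol. -/
def hasEdge {α : Type*} (R : Set (List α)) (k : ℕ) (u v : List α) : Prop :=
  ∃ W, isKmer R k W ∧ u = W.dropLast ∧ v = W.tail

/-- `u` lies on the path of the string `S` in `G_R^k`: it is one of the 0-indexed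
length-`(k-1)` windows `S[i..i+k-2]` of `S`, for `0 ≤ i ≤ |S| - k + 1`. -/
def onPath {α : Type*} (R : Set (List α)) (k : ℕ) (S u : List α) : Prop :=
  ∃ i, i ≤ S.length - k + 1 ∧ u = (S.drop i).take (k - 1)

/-- A node is critical if it has at least one predecessor with outdegree greater
than one (i.e. with at least two distinct successors). -/
def critical {α : Type*} (R : Set (List α)) (k : ℕ) (v : List α) : Prop :=
  ∃ p, hasEdge R k p v ∧ {w | hasEdge R k p w}.Nontrivial

/-- The path of `S` in `G_R^k` is safe for the color `κ` under the color-set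
assignment `col`: every node of the path with outdegree greater than one has
exactly one successor whose color set contains `κ`. -/
def safeFor {α C : Type*} (R : Set (List α)) (k : ℕ) (col : List α → Set C)
    (κ : C) (S : List α) : Prop :=
  ∀ u, onPath R k S u → {w | hasEdge R k u w}.Nontrivial →
    ∃! w, hasEdge R k u w ∧ κ ∈ col w

/- The second occurrence of `X` is followed by `c` instead of `b`, so the node `X` has the two
successors `tail(X)·b` and `tail(X)·c`; both are windows of `S`, hence critical (their common
predecessor `X` branches) and coloured `κ`. A safe path would need exactly one `κ`-coloured
successor of `X`. -/

section DeBruijn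

variable {α : Type*} {R : Set (List α)}

theorem hasEdge_of_append_singleton_infix {S u : List α} {a : α} (hS : S ∈ R)
    (hW : u ++ [a] <:+: S) (hu : u ≠ []) : hasEdge R (u.length + 1) u (u.tail ++ [a]) :=
  ⟨u ++ [a], ⟨by simp, S, hS, hW⟩, List.dropLast_concat.symm,
    (List.tail_append_of_ne_nil hu).symm⟩

variable {k : ℕ}

theorem onPath_append (P u Q : List α) (hu : u.length = k - 1) :
    onPath R k (P ++ u ++ Q) u := by
  refine ⟨P.length, ?_, ?_⟩
  · simp only [List.length_append]
    omega
  · rw [List.append_assoc, List.drop_left, ← hu, List.take_left]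

theorem onPath_tail_append {P u Q : List α} {a : α} (hu : u ≠ []) (hlen : u.length = k - 1) :
    onPath R k (P ++ u ++ a :: Q) (u.tail ++ [a]) := by
  have hsplit : P ++ u ++ a :: Q = (P ++ [u.head hu]) ++ (u.tail ++ [a]) ++ Q := by
    conv_lhs => rw [← List.cons_head_tail hu]
    simp only [List.append_assoc, List.cons_append, List.nil_append]
  rw [hsplit]
  refine onPath_append _ _ _ ?_
  have := List.length_pos_iff.mpr hu
  simp only [List.length_append, List.length_tail, List.length_singleton]
  omega

theorem critical_of_hasEdge_of_ne {p v w : List α} (hv : hasEdge R k p v) (hw : hasEdge R k p w)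
    (hvw : v ≠ w) : critical R k v :=
  ⟨p, hv, v, hv, w, hw, hvw⟩

theorem not_safeFor_of_two_colored_successors {C : Type*} {col : List α → Set C} {κ : C}
    {S u v w : List α} (hu : onPath R k S u) (hv : hasEdge R k u v) (hw : hasEdge R k u w)
    (hvw : v ≠ w) (hκv : κ ∈ col v) (hκw : κ ∈ col w) : ¬ safeFor R k col κ S := by
  intro hsafe
  obtain ⟨_, _, huniq⟩ := hsafe u hu ⟨v, hv, w, hw, hvw⟩
  exact hvw ((huniq v ⟨hv, hκv⟩).trans (huniq w ⟨hw, hκw⟩).symm)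

end DeBruijn

/-- Lemma 3. For `R = {X·b·X·c}` with `X ≠ []`, `b ≠ c`, and
`k = |X| + 1`: the node `X` lies on the path of `S = X·b·X·c` in `G_R^k`, it has two
distinct successors `tail(X)·b` and `tail(X)·c`, both lying on the path of `S` and both
critical; consequently, for every color-set assignment giving some color `κ` to every
critical node on the path of `S`, node `X` has two distinct successors colored with `κ`,
so the path of `S` is not safe for `κ`. -/
theorem ambiguous_repeat_not_safe {α : Type*} (X : List α) (hX : X ≠ [])
    (b c : α) (hbc : b ≠ c) (R : Set (List α)) (k : ℕ)
    (hR : R = {X ++ [b] ++ X ++ [c]}) (hk : k = X.length + 1) :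
    onPath R k (X ++ [b] ++ X ++ [c]) X ∧
    hasEdge R k X (X.tail ++ [b]) ∧
    hasEdge R k X (X.tail ++ [c]) ∧
    X.tail ++ [b] ≠ X.tail ++ [c] ∧
    onPath R k (X ++ [b] ++ X ++ [c]) (X.tail ++ [b]) ∧
    onPath R k (X ++ [b] ++ X ++ [c]) (X.tail ++ [c]) ∧
    critical R k (X.tail ++ [b]) ∧
    critical R k (X.tail ++ [c]) ∧
    (∀ (C : Type*) (col : List α → Set C) (κ : C),
      (∀ u, onPath R k (X ++ [b] ++ X ++ [c]) u → critical R k u → κ ∈ col u) →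
      (κ ∈ col (X.tail ++ [b]) ∧ κ ∈ col (X.tail ++ [c])) ∧
      ¬ safeFor R k col κ (X ++ [b] ++ X ++ [c])) := by
  subst hR hk
  set S := X ++ [b] ++ X ++ [c]
  have hS : S ∈ ({S} : Set (List α)) := Set.mem_singleton S
  have hedge_b := hasEdge_of_append_singleton_infix (a := b) hS ⟨[], X ++ [c], by simp [S]⟩ hX
  have hedge_c := hasEdge_of_append_singleton_infix (a := c) hS ⟨X ++ [b], [], by simp [S]⟩ hX
  have hne : X.tail ++ [b] ≠ X.tail ++ [c] := by simpa using hbc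
  have hpX : onPath {S} (X.length + 1) S X := by
    simpa [S] using onPath_append (R := {S}) [] X ([b] ++ X ++ [c]) (by simp)
  have hpb : onPath {S} (X.length + 1) S (X.tail ++ [b]) := by
    simpa [S] using onPath_tail_append (R := {S}) (P := []) (Q := X ++ [c]) hX (by simp)
  have hpc : onPath {S} (X.length + 1) S (X.tail ++ [c]) := by
    simpa [S] using onPath_tail_append (R := {S}) (P := X ++ [b]) (Q := []) hX (by simp)
  have hcrit_b := critical_of_hasEdge_of_ne hedge_b hedge_c hne
  have hcrit_c := critical_of_hasEdge_of_ne hedge_c hedge_b hne.symm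
  refine ⟨hpX, hedge_b, hedge_c, hne, hpb, hpc, hcrit_b, hcrit_c, fun C col κ hcol => ?_⟩
  have hκb := hcol _ hpb hcrit_b
  have hκc := hcol _ hpc hcrit_c
  exact ⟨⟨hκb, hκc⟩,
    not_safeFor_of_two_colored_successors hpX hedge_b hedge_c hne hκb hκc⟩
end
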